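/- Let $q$ be an odd prime power, $\alpha \in \mathbb{F}_q^\times$, and let $n$ be a positive integer coprime to $q^2-1$. Then the map $D_n(\cdot,\alpha)\colon \mathbb{F}_q \to \mathbb{F}_q$ induced by the Dickson polynomial $D_n(x,\alpha)$ is a bijection (i.e., $D_n(x,\alpha)$ is a permutation polynomial of $\mathbb{F}_q$). -/

import Mathlib

open Polynomial

private theorem dickson_eval_add' {R : Type*} [CommRing R] (a x y : R) (h : x * y = a) :
    ∀ n, (dickson 1 a n).eval (x + y) = x ^ n + y ^ n
  | 0 => by
    simp only [dickson_zero, eval_sub, eval_ofNat, eval_natCast, Nat.cast_one, pow_zero]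
    norm_num
  | 1 => by simp
  | n + 2 => by
    have ih1 := dickson_eval_add' a x y h n
    have ih2 := dickson_eval_add' a x y h (n + 1)
    simp only [dickson_add_two, eval_sub, eval_mul, eval_X, eval_C, ih1, ih2]
    rw [← h]; ring

private theorem pow_inj_of_root_of_unity {K : Type*} [Field K] {k n : ℕ} (hk : 1 < k)
    (hcop : Nat.Coprime n k) {x y : K} (hx : x ^ k = 1) (hy : y ^ k = 1)
    (hxy : x ^ n = y ^ n) : x = y := by
  obtain ⟨m, -, hm⟩ := Nat.exists_mul_mod_eq_one_of_coprime hcop hk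
  have key : ∀ z : K, z ^ k = 1 → z ^ (n * m) = z := by
    intro z hz
    conv_lhs => rw [← Nat.div_add_mod (n * m) k, pow_add, pow_mul, hz, one_pow, one_mul, hm,
      pow_one]
  calc x = x ^ (n * m) := (key x hx).symm
    _ = (x ^ n) ^ m := by rw [pow_mul]
    _ = (y ^ n) ^ m := by rw [hxy]
    _ = y ^ (n * m) := by rw [pow_mul]
    _ = y := key y hy

/-- For `n` coprime to `q²-1`, the Dickson polynomial `D_n(x, α)` is a
permutation polynomial of `𝔽_q`. -/
theorem dickson_bijective (F : Type*) [Field F] [Fintype F]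
    (hodd : Odd (Fintype.card F)) (α : F) (hα : α ≠ 0) (n : ℕ) (hn : 0 < n)
    (hcop : Nat.Coprime n (Fintype.card F ^ 2 - 1)) :
    Function.Bijective (fun β : F => (dickson 1 α n).eval β) := by
  classical
  set q := Fintype.card F with hq
  have hq2 : 2 ≤ q := Fintype.one_lt_card
  have hk : 1 < q ^ 2 - 1 := by
    have h4 : 2 * 2 ≤ q ^ 2 := by rw [pow_two]; exact Nat.mul_le_mul hq2 hq2
    omega
  -- the algebraic closure of F
  let K := AlgebraicClosure F
  let f : F →+* K := algebraMap F K
  have hf : Function.Injective f := f.injective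
  -- characteristic
  let p := ringChar F
  have hp : p.Prime := CharP.char_is_prime F p
  haveI : Fact p.Prime := ⟨hp⟩
  haveI : CharP K p := charP_of_injective_ringHom hf p
  obtain ⟨e, hpprime, hcard⟩ := FiniteField.card F p
  -- the q-power Frobenius on K
  let φ : K →+* K := iterateFrobenius K p e
  have hφ : ∀ x : K, φ x = x ^ q := by
    intro x; rw [iterateFrobenius_def, ← hcard]
  have hφf : ∀ x : F, φ (f x) = f x := by
    intro x
    rw [hφ, ← map_pow, FiniteField.pow_card]
  -- for each β : F produce u,v in K with u+v = fβ, u*v = fα, u^(q^2)=u, v^(q^2)=v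
  have main : ∀ β : F, ∃ u v : K, u + v = f β ∧ u * v = f α ∧
      u ^ (q ^ 2) = u ∧ v ^ (q ^ 2) = v := by
    intro β
    obtain ⟨u, hu⟩ := IsAlgClosed.exists_root (k := K) (X ^ 2 - C (f β) * X + C (f α))
      (by
        have : (X ^ 2 - C (f β) * X + C (f α) : K[X]).degree = 2 := by
          compute_degree!
        simp [this])
    rw [IsRoot.def] at hu
    simp only [eval_add, eval_sub, eval_pow, eval_mul, eval_X, eval_C] at hu
    set v := f β - u with hv
    have huv : u + v = f β := by rw [hv]; ring
    have hmul : u * v = f α := by rw [hv]; linear_combination -hu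
    -- roots under Frobenius
    have hroot : ∀ w : K, w ^ 2 - f β * w + f α = 0 → (φ w - u) * (φ w - v) = 0 := by
      intro w hw
      have := congrArg φ hw
      simp only [map_add, map_sub, map_mul, map_pow, map_zero, hφf] at this
      have h2 : (φ w) ^ 2 - f β * φ w + f α = 0 := this
      have : (φ w - u) * (φ w - v) = (φ w) ^ 2 - f β * φ w + f α := by
        rw [← huv, ← hmul]; ring
      rw [this, h2]
    have hu0 : u ^ 2 - f β * u + f α = 0 := by linear_combination hu
    have hv0 : v ^ 2 - f β * v + f α = 0 := by
      rw [hv]; linear_combination hu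
    have hu2 : φ (φ u) = u := by
      rcases mul_eq_zero.mp (hroot u hu0) with h | h
      · have h1 : φ u = u := sub_eq_zero.mp h
        rw [h1, h1]
      · have h1 : φ u = v := sub_eq_zero.mp h
        rcases mul_eq_zero.mp (hroot v hv0) with h2 | h2
        · -- φ v = u
          rw [h1]; exact sub_eq_zero.mp h2
        · -- φ v = v, so φ u = φ v, so u = v
          have h2 : φ v = v := sub_eq_zero.mp h2
          have huv' : u = v := by
            have : Function.Injective φ := φ.injective
            exact this (by rw [h1, h2])
          rw [h1, h2, huv']
    have hu2' : u ^ (q ^ 2) = u := by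
      have := hu2
      rw [hφ, hφ, ← pow_mul, ← pow_two] at this
      exact this
    refine ⟨u, v, huv, hmul, hu2', ?_⟩
    have hune : u ≠ 0 := by
      intro h0
      apply hα
      apply hf
      rw [map_zero, ← hmul, h0, zero_mul]
    have : v = f α * u⁻¹ := by rw [← hmul, mul_comm u v, mul_assoc, mul_inv_cancel₀ hune, mul_one]
    rw [this, mul_pow, ← map_pow, inv_pow, hu2']
    congr 1
    have : α ^ q ^ 2 = α := by
      rw [pow_two, pow_mul, FiniteField.pow_card, FiniteField.pow_card]
    rw [this]
  -- injectivity suffices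
  rw [← Finite.injective_iff_bijective]
  intro β₁ β₂ hβ
  simp only at hβ
  obtain ⟨u₁, v₁, hs₁, hm₁, hpu₁, hpv₁⟩ := main β₁
  obtain ⟨u₂, v₂, hs₂, hm₂, hpu₂, hpv₂⟩ := main β₂
  have hne : ∀ w : K, w ^ (q ^ 2) = w → w ≠ 0 → w ^ (q ^ 2 - 1) = 1 := by
    intro w hw hw0
    have h1 : w ^ (q ^ 2 - 1) * w = 1 * w := by
      rw [one_mul, ← pow_succ, Nat.sub_add_cancel (Nat.one_le_pow _ _ (by omega))]
      exact hw
    exact mul_right_cancel₀ hw0 h1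
  have hune : ∀ (u v : K), u * v = f α → u ≠ 0 ∧ v ≠ 0 := by
    intro u v huv
    constructor <;> intro h0 <;> apply hα <;> apply hf <;>
      simp [map_zero, ← huv, h0]
  obtain ⟨hu₁0, hv₁0⟩ := hune u₁ v₁ hm₁
  obtain ⟨hu₂0, hv₂0⟩ := hune u₂ v₂ hm₂
  -- evaluate the Dickson polynomial
  have heval : ∀ (β : F) (u v : K), u + v = f β → u * v = f α →
      f ((dickson 1 α n).eval β) = u ^ n + v ^ n := by
    intro β u v hs hm
    have : f ((dickson 1 α n).eval β) = (dickson 1 (f α) n).eval (f β) := by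
      rw [← map_dickson f, eval_map, eval₂_hom]
    rw [this, ← hs, dickson_eval_add' (f α) u v hm]
  have key : u₁ ^ n + v₁ ^ n = u₂ ^ n + v₂ ^ n := by
    rw [← heval β₁ u₁ v₁ hs₁ hm₁, ← heval β₂ u₂ v₂ hs₂ hm₂, hβ]
  have keymul : u₁ ^ n * v₁ ^ n = u₂ ^ n * v₂ ^ n := by
    rw [← mul_pow, ← mul_pow, hm₁, hm₂]
  -- so {u₁^n, v₁^n} = {u₂^n, v₂^n}
  have hsplit : (u₁ ^ n - u₂ ^ n) * (u₁ ^ n - v₂ ^ n) = 0 := by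
    have : (u₁ ^ n - u₂ ^ n) * (u₁ ^ n - v₂ ^ n)
        = (u₁ ^ n) ^ 2 - (u₂ ^ n + v₂ ^ n) * u₁ ^ n + u₂ ^ n * v₂ ^ n := by ring
    rw [this, ← key, ← keymul]
    ring
  apply hf
  rw [← hs₁, ← hs₂]
  rcases mul_eq_zero.mp hsplit with h | h
  · have h1 : u₁ ^ n = u₂ ^ n := sub_eq_zero.mp h
    have h2 : u₁ = u₂ := pow_inj_of_root_of_unity hk hcop
      (hne u₁ hpu₁ hu₁0) (hne u₂ hpu₂ hu₂0) h1
    have h3 : v₁ = v₂ := by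
      have := hm₁
      rw [h2, ← hm₂] at this
      exact (mul_left_cancel₀ hu₂0 this.symm).symm
    rw [h2, h3]
  · have h1 : u₁ ^ n = v₂ ^ n := sub_eq_zero.mp h
    have h2 : u₁ = v₂ := pow_inj_of_root_of_unity hk hcop
      (hne u₁ hpu₁ hu₁0) (hne v₂ hpv₂ hv₂0) h1
    have h3 : v₁ = u₂ := by
      have := hm₁
      rw [h2, ← hm₂, mul_comm u₂ v₂] at this
      exact (mul_left_cancel₀ hv₂0 this.symm).symm
    rw [h2, h3, add_comm]
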